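/- arXiv:1112.1403 — 6 statements merged into one kernel-verified Lean document; each statement's English description precedes it below -/
import Mathlib

section
/- Let Φ : [0,∞) → ℝ be concave and monotone increasing with Φ(0) = 0, and let φ = ψ = Φ(|·|). Let w : ℝ^d → [0,∞) be a compactly supported probability density (∫ w = 1). Then for every probability measure f on ℝ^d (for which the defining integrals exist), the continuous energy functional satisfies the lower bound ℰ[f] ≥ −∫_{ℝ^d} w(x) Φ(|x|) dx; in particular ℰ is bounded from below on the set of probability measures. -/
/-!
A concave Φ with Φ 0 = 0 is subadditive on [0, ∞), so with monotonicity the kernel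
K p q = Φ ‖p - q‖ obeys K p q ≤ K p z + K q z. Integrating this in p and q against f gives
∫∫ K df df ≤ 2 ∫ K(p, z) df(p) for every z, and averaging over z against the probability
density w bounds the repulsive term by the attractive one. The remaining term
-∫ w Φ(‖x‖) is nonpositive.
-/

open MeasureTheory Set

namespace ConcaveOn

variable {Φ : ℝ → ℝ}

lemma mul_map_le_map_mul (hconc : ConcaveOn ℝ (Ici 0) Φ) (hΦ0 : 0 ≤ Φ 0) {t x : ℝ}
    (ht₀ : 0 ≤ t) (ht₁ : t ≤ 1) (hx : 0 ≤ x) : t * Φ x ≤ Φ (t * x) := by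
  have h := hconc.2 (mem_Ici.2 hx) (mem_Ici.2 le_rfl) ht₀ (sub_nonneg.2 ht₁) (by ring)
  simp only [smul_eq_mul, mul_zero, add_zero] at h
  nlinarith [mul_nonneg (sub_nonneg.2 ht₁) hΦ0]

lemma map_add_le (hconc : ConcaveOn ℝ (Ici 0) Φ) (hΦ0 : 0 ≤ Φ 0) {a b : ℝ}
    (ha : 0 ≤ a) (hb : 0 ≤ b) : Φ (a + b) ≤ Φ a + Φ b := by
  rcases (add_nonneg ha hb).eq_or_lt with hab | hab
  · obtain ⟨rfl, rfl⟩ : a = 0 ∧ b = 0 := ⟨by linarith, by linarith⟩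
    simpa using hΦ0
  have hfrac : ∀ c, 0 ≤ c → c ≤ a + b → c / (a + b) * Φ (a + b) ≤ Φ c := fun c hc hcab => by
    simpa [div_mul_cancel₀ c hab.ne'] using
      hconc.mul_map_le_map_mul hΦ0 (div_nonneg hc hab.le) ((div_le_one hab).2 hcab) hab.le
  have hsplit : a / (a + b) * Φ (a + b) + b / (a + b) * Φ (a + b) = Φ (a + b) := by
    field_simp
  linarith [hfrac a ha (by linarith), hfrac b hb (by linarith)]

lemma map_dist_le_add {X : Type*} [PseudoMetricSpace X] (hconc : ConcaveOn ℝ (Ici 0) Φ)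
    (hmono : MonotoneOn Φ (Ici 0)) (hΦ0 : 0 ≤ Φ 0) (p q z : X) :
    Φ (dist p q) ≤ Φ (dist p z) + Φ (dist q z) :=
  calc Φ (dist p q) ≤ Φ (dist p z + dist q z) :=
        hmono (mem_Ici.2 dist_nonneg) (mem_Ici.2 (by positivity)) (dist_triangle_right p q z)
    _ ≤ Φ (dist p z) + Φ (dist q z) := hconc.map_add_le hΦ0 dist_nonneg dist_nonneg

end ConcaveOn

section Kernel

variable {X : Type*} [MeasurableSpace X] {μ : Measure X}

lemma integral_integral_le_two_mul_integral [IsProbabilityMeasure μ] {K : X → X → ℝ}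
    (hK : ∀ p q z, K p q ≤ K p z + K q z) (z : X) (hKz : Integrable (fun p => K p z) μ)
    (hKp : ∀ p, Integrable (K p) μ) (hKint : Integrable (fun p => ∫ x, K p x ∂μ) μ) :
    ∫ p, ∫ x, K p x ∂μ ∂μ ≤ 2 * ∫ p, K p z ∂μ := by
  have hinner : ∀ p, ∫ x, K p x ∂μ ≤ K p z + ∫ x, K x z ∂μ := fun p => by
    simpa [integral_add (integrable_const _) hKz] using
      integral_mono (hKp p) ((integrable_const _).add hKz) (fun x => hK p x z)
  calc ∫ p, ∫ x, K p x ∂μ ∂μ ≤ ∫ p, (K p z + ∫ x, K x z ∂μ) ∂μ :=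
        integral_mono hKint (hKz.add (integrable_const _)) hinner
    _ = 2 * ∫ p, K p z ∂μ := by
        rw [integral_add hKz (integrable_const _), integral_const, probReal_univ, one_smul]
        ring

lemma le_integral_mul_of_forall_le {w g : X → ℝ} {c : ℝ} (hw0 : ∀ x, 0 ≤ w x)
    (hwint : Integrable w μ) (hwnorm : ∫ x, w x ∂μ = 1)
    (hwg : Integrable (fun x => w x * g x) μ) (hg : ∀ x, c ≤ g x) :
    c ≤ ∫ x, w x * g x ∂μ := by
  have h := integral_mono (hwint.mul_const c) hwg fun x => mul_le_mul_of_nonneg_left (hg x) (hw0 x)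
  rwa [integral_mul_const, hwnorm, one_mul] at h

end Kernel

theorem energy_bounded_below_general {d : ℕ} (Φ : ℝ → ℝ)
    (hconc : ConcaveOn ℝ (Set.Ici 0) Φ)
    (hmono : MonotoneOn Φ (Set.Ici 0))
    (hΦ0 : Φ 0 = 0)
    (w : EuclideanSpace ℝ (Fin d) → ℝ)
    (hw0 : ∀ x, 0 ≤ w x) (hwint : Integrable w)
    (hwnorm : ∫ x, w x = 1)
    (f : Measure (EuclideanSpace ℝ (Fin d))) (hf : IsProbabilityMeasure f)
    -- existence of the defining integrals
    (h1 : ∀ x : EuclideanSpace ℝ (Fin d), Integrable (fun p => Φ ‖p - x‖) f)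
    (h2 : Integrable (fun x => w x * ∫ p, Φ ‖p - x‖ ∂f))
    (h3 : ∀ p : EuclideanSpace ℝ (Fin d), Integrable (fun x => Φ ‖p - x‖) f)
    (h4 : Integrable (fun p => ∫ x, Φ ‖p - x‖ ∂f) f) :
    -(∫ x, w x * Φ ‖x‖) ≤
      (∫ x, w x * ∫ p, Φ ‖p - x‖ ∂f) -
        (1 / 2) * ∫ p, ∫ x, Φ ‖p - x‖ ∂f ∂f := by
  have hK : ∀ p q z : EuclideanSpace ℝ (Fin d), Φ ‖p - q‖ ≤ Φ ‖p - z‖ + Φ ‖q - z‖ :=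
    fun p q z => by simpa only [dist_eq_norm] using hconc.map_dist_le_add hmono hΦ0.ge p q z
  have hrepulsion : ∀ z, (1 / 2) * ∫ p, ∫ x, Φ ‖p - x‖ ∂f ∂f ≤ ∫ p, Φ ‖p - z‖ ∂f := fun z => by
    linarith [integral_integral_le_two_mul_integral hK z (h1 z) h3 h4]
  have hattraction := le_integral_mul_of_forall_le hw0 hwint hwnorm h2 hrepulsion
  have hΦ_nonneg : ∀ t, 0 ≤ t → 0 ≤ Φ t := fun t ht =>
    hΦ0 ▸ hmono (mem_Ici.2 le_rfl) (mem_Ici.2 ht) ht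
  have hwΦ_nonneg : 0 ≤ ∫ x, w x * Φ ‖x‖ :=
    integral_nonneg fun x => mul_nonneg (hw0 x) (hΦ_nonneg _ (norm_nonneg x))
  linarith

/-- For `Φ : [0,∞) → ℝ` concave, monotone increasing with `Φ(0) = 0` and
equal radial kernels `φ = ψ = Φ(|·|)`, the continuous energy functional
`ℰ[f] = ∫∫ w(x)Φ(|p−x|) df(p) dx − (1/2)∫∫ Φ(|p−x|) df(x) df(p)`
satisfies `ℰ[f] ≥ −∫ w(x)Φ(|x|) dx` for every probability measure `f` (for which the
defining integrals exist); in particular `ℰ` is bounded from below. -/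
theorem energy_bounded_below {d : ℕ} (Φ : ℝ → ℝ)
    (hconc : ConcaveOn ℝ (Set.Ici 0) Φ)
    (hmono : MonotoneOn Φ (Set.Ici 0))
    (hΦ0 : Φ 0 = 0)
    (w : EuclideanSpace ℝ (Fin d) → ℝ)
    (hw0 : ∀ x, 0 ≤ w x) (hwint : Integrable w) (hwsupp : HasCompactSupport w)
    (hwnorm : ∫ x, w x = 1)
    (f : Measure (EuclideanSpace ℝ (Fin d))) (hf : IsProbabilityMeasure f)
    -- existence of the defining integrals
    (h1 : ∀ x : EuclideanSpace ℝ (Fin d), Integrable (fun p => Φ ‖p - x‖) f)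
    (h2 : Integrable (fun x => w x * ∫ p, Φ ‖p - x‖ ∂f))
    (h3 : ∀ p : EuclideanSpace ℝ (Fin d), Integrable (fun x => Φ ‖p - x‖) f)
    (h4 : Integrable (fun p => ∫ x, Φ ‖p - x‖ ∂f) f)
    (h5 : Integrable (fun x => w x * Φ ‖x‖)) :
    -(∫ x, w x * Φ ‖x‖) ≤
      (∫ x, w x * ∫ p, Φ ‖p - x‖ ∂f) -
        (1 / 2) * ∫ p, ∫ x, Φ ‖p - x‖ ∂f ∂f :=
  energy_bounded_below_general Φ hconc hmono hΦ0 w hw0 hwint hwnorm f hf h1 h2 h3 h4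
end

section
/- Let τ > 2, let Φ(r) = r^τ, and let w : ℝ^d → [0,∞) be a compactly supported probability density. For q ∈ ℝ^d define the probability measure f_q = (1/2)(δ_q + δ_{−q}). Then ℰ[f_q] = (1/2)∫ w(x)(|q−x|^τ + |q+x|^τ) dx − (1/4)(2|q|)^τ, and ℰ[f_q] → −∞ as |q| → ∞. In particular, the energy functional ℰ is not bounded from below on the set of probability measures when Φ grows like r^τ with τ > 2. -/
open MeasureTheory Filter Topology

lemma int_pair {E : Type*} [MeasurableSpace E] [TopologicalSpace E] [BorelSpace E] [T1Space E]
    (a b : E) (g : E → ℝ) :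
    ∫ p, g p ∂((2 : ENNReal)⁻¹ • (Measure.dirac a + Measure.dirac b)) =
      (1/2) * (g a + g b) := by
  rw [integral_smul_measure, integral_add_measure
      (((integrable_const (g a)).congr (ae_eq_dirac g).symm))
      (((integrable_const (g b)).congr (ae_eq_dirac g).symm)),
    integral_dirac, integral_dirac]
  simp [ENNReal.toReal_inv]

lemma F_tendsto_atBot (τ R : ℝ) (hτ : 2 < τ) (hR : 0 ≤ R) :
    Tendsto (fun t : ℝ => (t + R) ^ τ - (1/4) * (2 * t) ^ τ) atTop atBot := by
  have hτ0 : (0:ℝ) < τ := by linarith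
  have hc : (1:ℝ) < 2 ^ τ / 4 := by
    have h4 : (2:ℝ) ^ (2:ℝ) = 4 := by
      rw [show (2:ℝ) = ((2:ℕ):ℝ) by norm_num, Real.rpow_natCast]; norm_num
    have := Real.rpow_lt_rpow_left_iff (x := (2:ℝ)) (y := 2) (z := τ) one_lt_two |>.mpr hτ
    rw [h4] at this; linarith
  have h1 : Tendsto (fun t : ℝ => 1 + R / t) atTop (𝓝 1) := by
    have := (tendsto_const_nhds (x := R) (f := atTop)).div_atTop tendsto_id
    have h := tendsto_const_nhds (x := (1:ℝ)) (f := (atTop : Filter ℝ)) |>.add this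
    simpa using h
  have h2 : Tendsto (fun t : ℝ => (1 + R / t) ^ τ - 2 ^ τ / 4) atTop (𝓝 (1 - 2 ^ τ / 4)) := by
    have := (h1.rpow_const (p := τ) (Or.inl one_ne_zero)).sub_const (2 ^ τ / 4)
    simpa using this
  have h3 : Tendsto (fun t : ℝ => t ^ τ * ((1 + R / t) ^ τ - 2 ^ τ / 4)) atTop atBot :=
    (tendsto_rpow_atTop hτ0).atTop_mul_neg (by linarith) h2
  refine h3.congr' ?_
  filter_upwards [eventually_ge_atTop (1 : ℝ)] with t ht
  have ht0 : (0:ℝ) < t := by linarith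
  have e1 : (t + R) ^ τ = t ^ τ * (1 + R / t) ^ τ := by
    rw [← Real.mul_rpow (le_of_lt ht0) (by positivity)]
    congr 1; field_simp
  have e2 : (2 * t) ^ τ = 2 ^ τ * t ^ τ := Real.mul_rpow (by norm_num) (le_of_lt ht0)
  rw [e1, e2]; ring

/-- For `Φ(r) = r^τ` with `τ > 2` and a compactly supported probability
density `w`, the energy of the probability measures `f_q = ½(δ_q + δ_{−q})` equals
`ℰ[f_q] = ½∫ w(x)(|q−x|^τ + |q+x|^τ) dx − ¼(2|q|)^τ`, and `ℰ[f_q] → −∞` as `|q| → ∞`;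
in particular `ℰ` is not bounded from below on probability measures. -/
theorem energy_unbounded_below_for_fast_growth {d : ℕ} (τ : ℝ) (hτ : 2 < τ)
    (w : EuclideanSpace ℝ (Fin d) → ℝ)
    (hw0 : ∀ x, 0 ≤ w x) (hwint : Integrable w) (hwsupp : HasCompactSupport w)
    (hwnorm : ∫ x, w x = 1)
    (En : Measure (EuclideanSpace ℝ (Fin d)) → ℝ)
    (hEn : ∀ μ : Measure (EuclideanSpace ℝ (Fin d)), En μ =
      (∫ x, w x * ∫ p, ‖p - x‖ ^ τ ∂μ) -
        (1 / 2) * ∫ p, ∫ x, ‖p - x‖ ^ τ ∂μ ∂μ)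
    (fq : EuclideanSpace ℝ (Fin d) → Measure (EuclideanSpace ℝ (Fin d)))
    (hfq : ∀ q, fq q = (2 : ENNReal)⁻¹ • (Measure.dirac q + Measure.dirac (-q))) :
    (∀ q : EuclideanSpace ℝ (Fin d),
      En (fq q) =
        (1 / 2) * (∫ x, w x * (‖q - x‖ ^ τ + ‖q + x‖ ^ τ)) -
          (1 / 4) * (2 * ‖q‖) ^ τ) ∧
    Tendsto (fun q : EuclideanSpace ℝ (Fin d) => En (fq q))
      (Bornology.cobounded (EuclideanSpace ℝ (Fin d))) atBot := by
  have hτ0 : τ ≠ 0 := by positivity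
  have hτpos : (0:ℝ) < τ := by linarith
  have part1 : ∀ q : EuclideanSpace ℝ (Fin d),
      En (fq q) =
        (1 / 2) * (∫ x, w x * (‖q - x‖ ^ τ + ‖q + x‖ ^ τ)) -
          (1 / 4) * (2 * ‖q‖) ^ τ := by
    intro q
    have h2q : ‖q + q‖ = 2 * ‖q‖ := by
      rw [← two_smul ℝ q, norm_smul]; simp
    rw [hEn, hfq]
    rw [int_pair q (-q) (fun p => ∫ x, ‖p - x‖ ^ τ
      ∂((2 : ENNReal)⁻¹ • (Measure.dirac q + Measure.dirac (-q))))]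
    simp only [int_pair q (-q) (fun x => ‖q - x‖ ^ τ),
      int_pair q (-q) (fun x => ‖-q - x‖ ^ τ)]
    have e1 : (fun x => w x * ∫ p, ‖p - x‖ ^ τ
          ∂((2 : ENNReal)⁻¹ • (Measure.dirac q + Measure.dirac (-q))))
        = fun x => (1/2) * (w x * (‖q - x‖ ^ τ + ‖q + x‖ ^ τ)) := by
      funext x
      rw [int_pair q (-q) (fun p => ‖p - x‖ ^ τ)]
      have : ‖-q - x‖ = ‖q + x‖ := by rw [show -q - x = -(q + x) by abel, norm_neg]
      rw [this]; ring
    rw [e1, integral_const_mul]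
    have n1 : ‖q - q‖ = 0 := by simp
    have n2 : ‖q - -q‖ = 2 * ‖q‖ := by rw [show q - -q = q + q by abel, h2q]
    have n3 : ‖-q - q‖ = 2 * ‖q‖ := by
      rw [show -q - q = -(q + q) by abel, norm_neg, h2q]
    have n4 : ‖-q - -q‖ = 0 := by simp
    rw [n1, n2, n3, n4, Real.zero_rpow hτ0]
    ring
  refine ⟨part1, ?_⟩
  obtain ⟨r, hr⟩ := hwsupp.isBounded.subset_closedBall 0
  set R := max r 0 with hRdef
  have hR0 : 0 ≤ R := le_max_right _ _
  have hsupp : tsupport w ⊆ Metric.closedBall 0 R :=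
    hr.trans (Metric.closedBall_subset_closedBall (le_max_left _ _))
  have hbound : ∀ q : EuclideanSpace ℝ (Fin d),
      En (fq q) ≤ (‖q‖ + R) ^ τ - (1/4) * (2 * ‖q‖) ^ τ := by
    intro q
    rw [part1 q]
    have hint : (∫ x, w x * (‖q - x‖ ^ τ + ‖q + x‖ ^ τ)) ≤ 2 * (‖q‖ + R) ^ τ := by
      have hle : ∀ x, w x * (‖q - x‖ ^ τ + ‖q + x‖ ^ τ) ≤ w x * (2 * (‖q‖ + R) ^ τ) := by
        intro x
        by_cases hx : w x = 0
        · simp [hx]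
        · have hxR : ‖x‖ ≤ R := by
            have := hsupp (subset_tsupport w hx)
            simpa [Metric.mem_closedBall, dist_zero_right] using this
          have b1 : ‖q - x‖ ^ τ ≤ (‖q‖ + R) ^ τ :=
            Real.rpow_le_rpow (norm_nonneg _)
              (le_trans (norm_sub_le q x) (by linarith)) (le_of_lt hτpos)
          have b2 : ‖q + x‖ ^ τ ≤ (‖q‖ + R) ^ τ :=
            Real.rpow_le_rpow (norm_nonneg _)
              (le_trans (norm_add_le q x) (by linarith)) (le_of_lt hτpos)
          exact mul_le_mul_of_nonneg_left (by linarith) (hw0 x)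
      calc (∫ x, w x * (‖q - x‖ ^ τ + ‖q + x‖ ^ τ))
          ≤ ∫ x, w x * (2 * (‖q‖ + R) ^ τ) := by
            refine integral_mono_of_nonneg ?_ (hwint.mul_const _) ?_
            · filter_upwards with x
              have : (0:ℝ) ≤ ‖q - x‖ ^ τ + ‖q + x‖ ^ τ := by positivity
              exact mul_nonneg (hw0 x) this
            · filter_upwards with x; exact hle x
        _ = 2 * (‖q‖ + R) ^ τ := by rw [integral_mul_const, hwnorm, one_mul]
    linarith
  exact tendsto_atBot_mono hbound
    ((F_tendsto_atBot τ R hτ hR0).comp tendsto_norm_cobounded_atTop)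
end

section
/- Let w : ℝ → [0,∞) satisfy ∫ w = 1 with supp w ⊆ [α,ω] for real numbers α ≤ ω, and let f ∈ L¹(ℝ) satisfy f ≥ 0 a.e. and ∫ f = 1. Define G(p) = 2∫_{−∞}^p (w(x) − f(x)) dx and assume G(p)·f(p) = 0 for almost every p ∈ ℝ. Then ∫_{−∞}^α f(x) dx = 0, i.e. f vanishes almost everywhere on (−∞, α); equivalently, G(p) = 0 for all p ≤ α. -/
open MeasureTheory

/-- first step of the uniqueness proof: If `supp w ⊆ [α,ω]`,
`G(p) = 2∫_{−∞}^p (w − f)` and `G·f = 0` a.e., then `f` vanishes a.e. on `(−∞,α)`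
(equivalently `∫_{−∞}^α f = 0`), and `G(p) = 0` for all `p ≤ α`. -/
theorem equilibrium_vanishes_left_of_support (α ω : ℝ) (hαω : α ≤ ω)
    (w : ℝ → ℝ) (hw0 : ∀ x, 0 ≤ w x) (hwint : Integrable w)
    (hwnorm : ∫ x, w x = 1) (hwsupp : Function.support w ⊆ Set.Icc α ω)
    (f : ℝ → ℝ) (hfint : Integrable f) (hf0 : ∀ᵐ x ∂(volume : Measure ℝ), 0 ≤ f x)
    (hfnorm : ∫ x, f x = 1)
    (hGf : ∀ᵐ p ∂(volume : Measure ℝ),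
      (2 * ∫ x in Set.Iic p, (w x - f x)) * f p = 0) :
    (∫ x in Set.Iic α, f x = 0) ∧
    (∀ᵐ x ∂(volume.restrict (Set.Iio α)), f x = 0) ∧
    (∀ p ≤ α, 2 * ∫ x in Set.Iic p, (w x - f x) = 0) := by
  set F : ℝ → ℝ := fun p => ∫ x in Set.Iic p, f x with hFdef
  have hfI : ∀ p : ℝ, IntegrableOn f (Set.Iic p) := fun p => hfint.integrableOn
  have hf0r : ∀ s : Set ℝ, 0 ≤ᵐ[volume.restrict s] f := fun s => ae_restrict_of_ae hf0
  have hFnonneg : ∀ p, 0 ≤ F p := fun p => integral_nonneg_of_ae (hf0r _)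
  have hFmono : Monotone F := fun p q hpq =>
    setIntegral_mono_set (hfI q) (hf0r _)
      (HasSubset.Subset.eventuallyLE (Set.Iic_subset_Iic.2 hpq))
  -- if F p = 0 then the set where f ≠ 0 inside Iic p is null
  have hker : ∀ p : ℝ, F p = 0 → volume ({x | f x ≠ 0} ∩ Set.Iic p) = 0 := by
    intro p hp
    have h := (integral_eq_zero_iff_of_nonneg_ae (hf0r _) (hfI p)).1 hp
    have h2 : (volume.restrict (Set.Iic p)) {x | f x ≠ 0} = 0 := h
    rwa [Measure.restrict_apply' measurableSet_Iic] at h2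
  -- the bad set where the equilibrium condition fails
  set E : Set ℝ := {p | ¬ (2 * ∫ x in Set.Iic p, (w x - f x)) * f p = 0} with hEdef
  have hE : volume E = 0 := hGf
  -- for p < α outside E : F p = 0 ∨ f p = 0
  have hdisj : ∀ p < α, p ∉ E → F p = 0 ∨ f p = 0 := by
    intro p hpα hpE
    have hP : (2 * ∫ x in Set.Iic p, (w x - f x)) * f p = 0 := not_not.1 hpE
    have hw' : ∫ x in Set.Iic p, w x = 0 := by
      have hwz : Set.EqOn w (fun _ => (0:ℝ)) (Set.Iic p) := by
        intro x hx
        by_contra hx0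
        have := hwsupp hx0
        exact absurd (lt_of_le_of_lt (le_trans this.1 (Set.mem_Iic.1 hx)) hpα) (lt_irrefl α)
      rw [setIntegral_congr_fun measurableSet_Iic hwz]; simp
    have hsub : ∫ x in Set.Iic p, (w x - f x) = -(F p) := by
      rw [integral_sub (hwint.integrableOn) (hfI p), hw']; simp [hFdef]
    rw [hsub] at hP
    have : F p * f p = 0 := by nlinarith
    rcases mul_eq_zero.1 this with h | h
    · exact Or.inl h
    · exact Or.inr h
  -- main claim: {f ≠ 0} ∩ Iio α is null
  have hmain : volume ({x | f x ≠ 0} ∩ Set.Iio α) = 0 := by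
    by_cases hB : ∃ p, p < α ∧ F p = 0
    · set B : Set ℝ := {p | p < α ∧ F p = 0} with hBdef
      have hBne : B.Nonempty := hB
      have hBbdd : BddAbove B := ⟨α, fun p hp => le_of_lt hp.1⟩
      set t : ℝ := sSup B with htdef
      have hFlt : ∀ p < t, F p = 0 := by
        intro p hp
        obtain ⟨q, hqB, hpq⟩ := exists_lt_of_lt_csSup hBne hp
        exact le_antisymm (hqB.2 ▸ hFmono (le_of_lt hpq)) (hFnonneg p)
      -- {f ≠ 0} ∩ Iio t is null
      have hN : volume ({x | f x ≠ 0} ∩ Set.Iio t) = 0 := by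
        have hsub : {x | f x ≠ 0} ∩ Set.Iio t ⊆
            ⋃ n : ℕ, ({x | f x ≠ 0} ∩ Set.Iic (t - 1 / (n + 1))) := by
          rintro x ⟨hx, hxt⟩
          have hxt' : x < t := hxt
          obtain ⟨n, hn⟩ := exists_nat_one_div_lt (show (0:ℝ) < t - x by linarith)
          exact Set.mem_iUnion.2 ⟨n, hx, Set.mem_Iic.2 (by push_cast at hn ⊢; linarith)⟩
        refine measure_mono_null hsub (measure_iUnion_null fun n => ?_)
        apply hker
        apply hFlt
        have : (0:ℝ) < 1 / (n + 1) := by positivity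
        linarith
      -- combine
      have hsub : {x | f x ≠ 0} ∩ Set.Iio α ⊆
          (E ∪ {t}) ∪ ({x | f x ≠ 0} ∩ Set.Iio t) := by
        rintro p ⟨hp, hpα⟩
        by_cases hpE : p ∈ E
        · exact Or.inl (Or.inl hpE)
        rcases hdisj p hpα hpE with hFp | hfp
        · have hpt : p ≤ t := le_csSup hBbdd ⟨hpα, hFp⟩
          rcases eq_or_lt_of_le hpt with rfl | hlt
          · exact Or.inl (Or.inr rfl)
          · exact Or.inr ⟨hp, hlt⟩
        · exact absurd hfp hp
      refine measure_mono_null hsub ?_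
      refine measure_union_null (measure_union_null hE ?_) hN
      simp
    · push_neg at hB
      have hsub : {x | f x ≠ 0} ∩ Set.Iio α ⊆ E := by
        rintro p ⟨hp, hpα⟩
        by_contra hpE
        rcases hdisj p hpα hpE with hFp | hfp
        · exact hB p hpα hFp
        · exact hp hfp
      exact measure_mono_null hsub hE
  -- statement 2
  have hstmt2 : ∀ᵐ x ∂(volume.restrict (Set.Iio α)), f x = 0 := by
    rw [ae_iff, Measure.restrict_apply' measurableSet_Iio]
    exact hmain
  -- f vanishes a.e. on Iic α
  have hIic : volume ({x | f x ≠ 0} ∩ Set.Iic α) = 0 := by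
    have hsub : {x | f x ≠ 0} ∩ Set.Iic α ⊆ ({x | f x ≠ 0} ∩ Set.Iio α) ∪ {α} := by
      rintro x ⟨hx, hxα⟩
      rcases lt_or_eq_of_le (Set.mem_Iic.1 hxα) with h | rfl
      · exact Or.inl ⟨hx, h⟩
      · exact Or.inr rfl
    exact measure_mono_null hsub (measure_union_null hmain (by simp))
  have hzeroIic : ∀ p ≤ α, ∫ x in Set.Iic p, f x = 0 := by
    intro p hpα
    have hae : f =ᵐ[volume.restrict (Set.Iic p)] 0 := by
      rw [Filter.EventuallyEq, ae_iff, Measure.restrict_apply' measurableSet_Iic]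
      refine measure_mono_null ?_ hIic
      rintro x ⟨hx, hxp⟩
      exact ⟨hx, le_trans hxp hpα⟩
    rw [integral_congr_ae hae]; simp
  refine ⟨hzeroIic α le_rfl, hstmt2, fun p hpα => ?_⟩
  have hw' : ∫ x in Set.Iic p, w x = 0 := by
    have hae : w =ᵐ[volume.restrict (Set.Iic p)] 0 := by
      rw [Filter.EventuallyEq, ae_iff, Measure.restrict_apply' measurableSet_Iic]
      refine measure_mono_null (fun x hx => ?_) (measure_singleton α)
      have h1 := hwsupp hx.1
      have : x = α := le_antisymm (le_trans hx.2 hpα) h1.1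
      exact this
    rw [integral_congr_ae hae]; simp
  rw [integral_sub (hwint.integrableOn) (hfI p), hw', hzeroIic p hpα]
  ring
end

section
/- Let w : ℝ → [0,∞) satisfy ∫ w = 1 with supp w ⊆ [α,ω] for real numbers α ≤ ω, and let f ∈ L¹(ℝ) satisfy f ≥ 0 a.e. and ∫ f = 1. Define G(p) = 2∫_{−∞}^p (w(x) − f(x)) dx and assume G(p)·f(p) = 0 for almost every p ∈ ℝ. Then ∫_ω^∞ f(x) dx = 0, i.e. f vanishes almost everywhere on (ω, ∞); equivalently, G(p) = 0 for all p ≥ ω. -/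
open MeasureTheory Set

/-! For `p ≥ ω` the mass balance `∫ w = ∫ f` together with `supp w ⊆ (-∞, ω]` gives
`G(p) = 2 F(p)` with `F(p) = ∫_{x > p} f`, so the equilibrium condition reads `f(p) F(p) = 0`
for a.e. `p > ω`. Splitting the product integral of `f(p) f(x)` over `(ω, ∞)²` along the diagonal
and using its symmetry, `(∫_{x > ω} f)² = 2 ∫_{p > ω} f(p) F(p) = 0`; as `f ≥ 0`, `f` vanishes
a.e. on `(ω, ∞)`. -/

theorem setIntegral_prod_mul_eq_integral_mul_setIntegral_slice {α β : Type*}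
    [MeasurableSpace α] [MeasurableSpace β] {μ : Measure α} {ν : Measure β} [SFinite μ]
    [SFinite ν] {f : α → ℝ} {g : β → ℝ} (hf : Integrable f μ) (hg : Integrable g ν)
    {s : Set (α × β)} (hs : MeasurableSet s) :
    ∫ z in s, f z.1 * g z.2 ∂μ.prod ν = ∫ x, f x * ∫ y in Prod.mk x ⁻¹' s, g y ∂ν ∂μ := by
  rw [← integral_indicator hs, integral_prod _ ((hf.mul_prod hg).indicator hs)]
  congr 1 with x
  rw [← integral_const_mul, ← integral_indicator (measurable_prodMk_left hs)]
  congr 1 with y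

section

variable {μ : Measure ℝ} [SFinite μ] [NullSingletonClass μ] {g : ℝ → ℝ}

theorem sq_integral_eq_two_mul_integral_mul_setIntegral_Ioi (hg : Integrable g μ) :
    (∫ x, g x ∂μ) ^ 2 = 2 * ∫ p, g p * ∫ x in Ioi p, g x ∂μ ∂μ := by
  set S : Set (ℝ × ℝ) := {z | z.1 < z.2}
  have hS : MeasurableSet S := measurableSet_lt measurable_fst measurable_snd
  have h_upper : ∫ z in S, g z.1 * g z.2 ∂μ.prod μ = ∫ p, g p * ∫ x in Ioi p, g x ∂μ ∂μ :=
    setIntegral_prod_mul_eq_integral_mul_setIntegral_slice hg hg hS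
  have h_slice (p : ℝ) : Prod.mk p ⁻¹' (Prod.swap ⁻¹' Sᶜ) = Ici p := by ext x; simp [S]
  have h_lower : ∫ z in Sᶜ, g z.1 * g z.2 ∂μ.prod μ = ∫ p, g p * ∫ x in Ioi p, g x ∂μ ∂μ :=
    calc ∫ z in Sᶜ, g z.1 * g z.2 ∂μ.prod μ = ∫ z in Sᶜ, g z.2 * g z.1 ∂μ.prod μ := by
          congr 1 with z; ring
      _ = ∫ z in Prod.swap ⁻¹' Sᶜ, g z.1 * g z.2 ∂μ.prod μ :=
          (Measure.measurePreserving_swap.setIntegral_preimage_emb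
            MeasurableEquiv.prodComm.measurableEmbedding (fun z => g z.2 * g z.1) Sᶜ).symm
      _ = ∫ p, g p * ∫ x in Ici p, g x ∂μ ∂μ := by
          rw [setIntegral_prod_mul_eq_integral_mul_setIntegral_slice hg hg
            (hS.compl.preimage measurable_swap)]
          simp only [h_slice]
      _ = ∫ p, g p * ∫ x in Ioi p, g x ∂μ ∂μ := by
          simp only [setIntegral_congr_set (Ioi_ae_eq_Ici (μ := μ))]
  rw [sq, ← integral_prod_mul, ← integral_add_compl hS (hg.mul_prod hg), h_upper, h_lower]
  ring

theorem integral_eq_zero_of_ae_mul_setIntegral_Ioi_eq_zero (hg : Integrable g μ)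
    (h : ∀ᵐ p ∂μ, g p * ∫ x in Ioi p, g x ∂μ = 0) : ∫ x, g x ∂μ = 0 := by
  have hsq := sq_integral_eq_two_mul_integral_mul_setIntegral_Ioi hg
  rwa [integral_eq_zero_of_ae h, mul_zero, sq_eq_zero_iff] at hsq

end

theorem setIntegral_Iic_sub_eq_setIntegral_Ioi {μ : Measure ℝ} {w f : ℝ → ℝ} {p : ℝ}
    (hw : Integrable w μ) (hf : Integrable f μ) (hwf : ∫ x, w x ∂μ = ∫ x, f x ∂μ)
    (hsupp : Function.support w ⊆ Iic p) :
    ∫ x in Iic p, (w x - f x) ∂μ = ∫ x in Ioi p, f x ∂μ := by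
  have hw_Iic : ∫ x in Iic p, w x ∂μ = ∫ x, w x ∂μ :=
    setIntegral_eq_integral_of_forall_compl_eq_zero fun x hx =>
      Function.notMem_support.1 fun hwx => hx (hsupp hwx)
  have hf_split := integral_add_compl (measurableSet_Iic (a := p)) hf
  rw [compl_Iic] at hf_split
  rw [integral_sub hw.integrableOn hf.integrableOn, hw_Iic, hwf]
  linarith

theorem equilibrium_vanishes_right_of_support_general (α ω : ℝ)
    (w : ℝ → ℝ) (hwint : Integrable w)
    (hwnorm : ∫ x, w x = 1) (hwsupp : Function.support w ⊆ Set.Icc α ω)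
    (f : ℝ → ℝ) (hfint : Integrable f) (hf0 : ∀ᵐ x ∂(volume : Measure ℝ), 0 ≤ f x)
    (hfnorm : ∫ x, f x = 1)
    (hGf : ∀ᵐ p ∂(volume : Measure ℝ),
      (2 * ∫ x in Set.Iic p, (w x - f x)) * f p = 0) :
    (∫ x in Set.Ici ω, f x = 0) ∧
    (∀ᵐ x ∂(volume.restrict (Set.Ioi ω)), f x = 0) ∧
    (∀ p ≥ ω, 2 * ∫ x in Set.Iic p, (w x - f x) = 0) := by
  have hG : ∀ p ≥ ω, ∫ x in Iic p, (w x - f x) = ∫ x in Ioi p, f x := fun p hp =>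
    setIntegral_Iic_sub_eq_setIntegral_Ioi hwint hfint (hwnorm.trans hfnorm.symm)
      (hwsupp.trans (Icc_subset_Iic_self.trans (Iic_subset_Iic.2 hp)))
  have h_tail : ∫ x in Ioi ω, f x = 0 := by
    refine integral_eq_zero_of_ae_mul_setIntegral_Ioi_eq_zero hfint.restrict ?_
    filter_upwards [ae_restrict_of_ae hGf, ae_restrict_mem measurableSet_Ioi] with p hp hωp
    rw [hG p hωp.le] at hp
    rw [Measure.restrict_restrict_of_subset (Ioi_subset_Ioi hωp.le)]
    simpa [mul_comm] using hp
  have h_ae : ∀ᵐ x ∂volume.restrict (Ioi ω), f x = 0 :=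
    (integral_eq_zero_iff_of_nonneg_ae (ae_restrict_of_ae hf0) hfint.restrict).1 h_tail
  refine ⟨by rwa [setIntegral_congr_set Ioi_ae_eq_Ici.symm], h_ae, fun p hp => ?_⟩
  have h_ae_p := ae_restrict_of_ae_restrict_of_subset (Ioi_subset_Ioi hp) h_ae
  rw [hG p hp, integral_eq_zero_of_ae h_ae_p, mul_zero]

/-- second step of the uniqueness proof: If `supp w ⊆ [α,ω]`,
`G(p) = 2∫_{−∞}^p (w − f)` and `G·f = 0` a.e., then `f` vanishes a.e. on `(ω,∞)`
(equivalently `∫_ω^∞ f = 0`), and `G(p) = 0` for all `p ≥ ω`. -/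
theorem equilibrium_vanishes_right_of_support (α ω : ℝ) (hαω : α ≤ ω)
    (w : ℝ → ℝ) (hw0 : ∀ x, 0 ≤ w x) (hwint : Integrable w)
    (hwnorm : ∫ x, w x = 1) (hwsupp : Function.support w ⊆ Set.Icc α ω)
    (f : ℝ → ℝ) (hfint : Integrable f) (hf0 : ∀ᵐ x ∂(volume : Measure ℝ), 0 ≤ f x)
    (hfnorm : ∫ x, f x = 1)
    (hGf : ∀ᵐ p ∂(volume : Measure ℝ),
      (2 * ∫ x in Set.Iic p, (w x - f x)) * f p = 0) :
    (∫ x in Set.Ici ω, f x = 0) ∧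
    (∀ᵐ x ∂(volume.restrict (Set.Ioi ω)), f x = 0) ∧
    (∀ p ≥ ω, 2 * ∫ x in Set.Iic p, (w x - f x) = 0) :=
  equilibrium_vanishes_right_of_support_general α ω w hwint hwnorm hwsupp f hfint hf0 hfnorm hGf
end

section
/- Let w : ℝ → [0,∞) satisfy ∫ w = 1 with supp w ⊆ [α,ω] for real numbers α ≤ ω, and let f ∈ L¹(ℝ) satisfy f ≥ 0 a.e. and ∫ f = 1. Define G(p) = 2∫_{−∞}^p (w(x) − f(x)) dx and assume G(p)·f(p) = 0 for almost every p ∈ ℝ. Then G is nondecreasing on (α,ω) and in fact G ≡ 0 on all of ℝ; equivalently, ∫_{−∞}^p w(x) dx = ∫_{−∞}^p f(x) dx for every p ∈ ℝ. -/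
open MeasureTheory

/-- final step of the uniqueness proof: If `supp w ⊆ [α,ω]`,
`G(p) = 2∫_{−∞}^p (w − f)` and `G·f = 0` a.e., then `G` is nondecreasing on `(α,ω)`
and in fact `G ≡ 0` on all of `ℝ`; equivalently `∫_{−∞}^p w = ∫_{−∞}^p f` for all `p`. -/
theorem equilibrium_field_identically_zero (α ω : ℝ) (hαω : α ≤ ω)
    (w : ℝ → ℝ) (hw0 : ∀ x, 0 ≤ w x) (hwint : Integrable w)
    (hwnorm : ∫ x, w x = 1) (hwsupp : Function.support w ⊆ Set.Icc α ω)
    (f : ℝ → ℝ) (hfint : Integrable f) (hf0 : ∀ᵐ x ∂(volume : Measure ℝ), 0 ≤ f x)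
    (hfnorm : ∫ x, f x = 1)
    (hGf : ∀ᵐ p ∂(volume : Measure ℝ),
      (2 * ∫ x in Set.Iic p, (w x - f x)) * f p = 0) :
    MonotoneOn (fun p => 2 * ∫ x in Set.Iic p, (w x - f x)) (Set.Ioo α ω) ∧
    (∀ p : ℝ, 2 * ∫ x in Set.Iic p, (w x - f x) = 0) ∧
    (∀ p : ℝ, ∫ x in Set.Iic p, w x = ∫ x in Set.Iic p, f x) := by
  have hgint : Integrable (fun x => w x - f x) := hwint.sub hfint
  set H : ℝ → ℝ := fun p => ∫ x in Set.Iic p, (w x - f x) with hHdef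
  -- H is continuous
  have hHrepr : ∀ p, H p = H 0 + ∫ x in (0:ℝ)..p, (w x - f x) := by
    intro p
    have := intervalIntegral.integral_Iic_sub_Iic (μ := volume) (f := fun x => w x - f x)
      hgint.integrableOn hgint.integrableOn (a := 0) (b := p)
    simp only [hHdef] at *
    linarith [this]
  have hHcont : Continuous H := by
    have : Continuous fun p => H 0 + ∫ x in (0:ℝ)..p, (w x - f x) :=
      continuous_const.add (hgint.continuous_primitive 0)
    exact this.congr fun p => (hHrepr p).symm
  -- difference of H as an integral over Ioc
  have hdiff : ∀ a b : ℝ, a ≤ b → H b - H a = ∫ x in Set.Ioc a b, (w x - f x) := by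
    intro a b hab
    show (∫ x in Set.Iic b, (w x - f x)) - (∫ x in Set.Iic a, (w x - f x)) = _
    rw [intervalIntegral.integral_Iic_sub_Iic (μ := volume) hgint.integrableOn hgint.integrableOn,
      intervalIntegral.integral_of_le hab]
  -- H · f = 0 a.e.
  have hHf : ∀ᵐ p ∂(volume : Measure ℝ), H p * f p = 0 := by
    filter_upwards [hGf] with p hp
    have : (2 : ℝ) * (H p * f p) = 0 := by rw [← mul_assoc]; exact hp
    linarith
  -- integral of f over Iic tends to 1 at +∞
  have htop : Filter.Tendsto (fun p => ∫ x in Set.Iic p, f x) Filter.atTop (nhds 1) := by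
    have := (aecover_Iic (μ := (volume : Measure ℝ))
        (l := Filter.atTop) (b := fun p : ℝ => p)
        Filter.tendsto_id).integral_tendsto_of_countably_generated hfint
    rwa [hfnorm] at this
  -- integral of f over Iic tends to 0 at -∞
  have hbot : Filter.Tendsto (fun p => ∫ x in Set.Iic p, f x) Filter.atBot (nhds 0) := by
    have h1 : Filter.Tendsto (fun p : ℝ => ∫ x in Set.Ioi p, f x) Filter.atBot (nhds 1) := by
      have := (aecover_Ioi (μ := (volume : Measure ℝ))
          (l := Filter.atBot) (a := fun p : ℝ => p)
          Filter.tendsto_id).integral_tendsto_of_countably_generated hfint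
      rwa [hfnorm] at this
    have heq : ∀ p : ℝ, ∫ x in Set.Iic p, f x = 1 - ∫ x in Set.Ioi p, f x := by
      intro p
      have := intervalIntegral.integral_Iic_add_Ioi (μ := volume) (b := p)
        hfint.integrableOn hfint.integrableOn
      rw [hfnorm] at this
      linarith
    simp only [heq]
    have := (tendsto_const_nhds (x := (1:ℝ)) (f := Filter.atBot)).sub h1
    simpa using this
  -- a.e. vanishing of f on intervals where H ≠ 0, for the key step
  -- Main claim: H ≡ 0
  have hH0 : ∀ p, H p = 0 := by
    intro p₀
    by_contra hne
    rcases lt_or_gt_of_ne hne with hc | hc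
    · -- H p₀ < 0 : move to the left
      set c := H p₀ with hcdef
      set S := {p : ℝ | p ≤ p₀ ∧ c / 2 ≤ H p} with hSdef
      have hSclosed : IsClosed S := by
        apply IsClosed.inter
        · exact isClosed_le continuous_id continuous_const
        · exact isClosed_le continuous_const hHcont
      have hSbdd : BddAbove S := ⟨p₀, fun x hx => hx.1⟩
      have hSne : S.Nonempty := by
        have hev : ∀ᶠ p in Filter.atBot, ∫ x in Set.Iic p, f x < -c / 2 := by
          apply hbot.eventually_lt_const
          linarith
        have hev2 : ∀ᶠ p in Filter.atBot, p ≤ p₀ := Filter.eventually_le_atBot p₀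
        rcases (hev.and hev2).exists with ⟨p, hp1, hp2⟩
        refine ⟨p, hp2, ?_⟩
        have hw_nonneg : 0 ≤ ∫ x in Set.Iic p, w x :=
          setIntegral_nonneg measurableSet_Iic fun x _ => hw0 x
        have : H p = (∫ x in Set.Iic p, w x) - ∫ x in Set.Iic p, f x := by
          rw [hHdef]
          exact integral_sub hwint.integrableOn hfint.integrableOn
        rw [this]; linarith
      set a := sSup S with hadef
      have haS : a ∈ S := hSclosed.csSup_mem hSne hSbdd
      have hap₀ : a < p₀ := by
        rcases lt_or_eq_of_le haS.1 with h | h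
        · exact h
        · exfalso; have := haS.2; rw [h] at this; linarith
      -- on Ioc a p₀, H < c/2
      have hHlt : ∀ x ∈ Set.Ioc a p₀, H x < c / 2 := by
        intro x hx
        by_contra hge
        push_neg at hge
        have : x ∈ S := ⟨hx.2, hge⟩
        have := le_csSup hSbdd this
        exact absurd hx.1 (not_lt.mpr this)
      -- f = 0 a.e. on Ioc a p₀
      have hfz : ∀ᵐ x ∂(volume.restrict (Set.Ioc a p₀)), f x = 0 := by
        rw [ae_restrict_iff' measurableSet_Ioc]
        filter_upwards [hHf] with x hx hmem
        have hHx : H x ≠ 0 := by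
          have := hHlt x hmem; intro h; rw [h] at this; linarith
        exact (mul_eq_zero.mp hx).resolve_left hHx
      have hfz' : ∫ x in Set.Ioc a p₀, f x = 0 :=
        integral_eq_zero_of_ae hfz
      have hsub : H p₀ - H a = ∫ x in Set.Ioc a p₀, (w x - f x) :=
        hdiff a p₀ (le_of_lt hap₀)
      have hsplit : ∫ x in Set.Ioc a p₀, (w x - f x)
          = (∫ x in Set.Ioc a p₀, w x) - ∫ x in Set.Ioc a p₀, f x :=
        integral_sub hwint.integrableOn hfint.integrableOn
      have hwpos : 0 ≤ ∫ x in Set.Ioc a p₀, w x :=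
        setIntegral_nonneg measurableSet_Ioc fun x _ => hw0 x
      have := haS.2
      rw [hsplit, hfz'] at hsub
      linarith
    · -- H p₀ > 0 : move to the right
      set c := H p₀ with hcdef
      set S := {p : ℝ | p₀ ≤ p ∧ H p ≤ c / 2} with hSdef
      have hSclosed : IsClosed S := by
        apply IsClosed.inter
        · exact isClosed_le continuous_const continuous_id
        · exact isClosed_le hHcont continuous_const
      have hSbdd : BddBelow S := ⟨p₀, fun x hx => hx.1⟩
      have hSne : S.Nonempty := by
        have hev : ∀ᶠ p in Filter.atTop, 1 - c / 2 < ∫ x in Set.Iic p, f x := by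
          apply htop.eventually_const_lt
          linarith
        have hev2 : ∀ᶠ p in Filter.atTop, p₀ ≤ p := Filter.eventually_ge_atTop p₀
        rcases (hev.and hev2).exists with ⟨p, hp1, hp2⟩
        refine ⟨p, hp2, ?_⟩
        have hwle : (∫ x in Set.Iic p, w x) ≤ 1 := by
          rw [← hwnorm]
          exact setIntegral_le_integral hwint (Filter.Eventually.of_forall hw0)
        have : H p = (∫ x in Set.Iic p, w x) - ∫ x in Set.Iic p, f x := by
          rw [hHdef]
          exact integral_sub hwint.integrableOn hfint.integrableOn
        rw [this]; linarith
      set b := sInf S with hbdef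
      have hbS : b ∈ S := hSclosed.csInf_mem hSne hSbdd
      have hp₀b : p₀ < b := by
        rcases lt_or_eq_of_le hbS.1 with h | h
        · exact h
        · exfalso; have := hbS.2; rw [← h] at this; linarith
      -- on Ioo p₀ b, H > c/2
      have hHgt : ∀ x ∈ Set.Ioo p₀ b, c / 2 < H x := by
        intro x hx
        by_contra hle
        push_neg at hle
        have : x ∈ S := ⟨le_of_lt hx.1, hle⟩
        have := csInf_le hSbdd this
        exact absurd hx.2 (not_lt.mpr this)
      -- f = 0 a.e. on Ioo p₀ b
      have hfz : ∀ᵐ x ∂(volume.restrict (Set.Ioo p₀ b)), f x = 0 := by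
        rw [ae_restrict_iff' measurableSet_Ioo]
        filter_upwards [hHf] with x hx hmem
        have hHx : H x ≠ 0 := by
          have := hHgt x hmem; intro h; rw [h] at this; linarith
        exact (mul_eq_zero.mp hx).resolve_left hHx
      have hfz' : ∫ x in Set.Ioc p₀ b, f x = 0 := by
        rw [integral_Ioc_eq_integral_Ioo]
        exact integral_eq_zero_of_ae hfz
      have hsub : H b - H p₀ = ∫ x in Set.Ioc p₀ b, (w x - f x) :=
        hdiff p₀ b (le_of_lt hp₀b)
      have hsplit : ∫ x in Set.Ioc p₀ b, (w x - f x)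
          = (∫ x in Set.Ioc p₀ b, w x) - ∫ x in Set.Ioc p₀ b, f x :=
        integral_sub hwint.integrableOn hfint.integrableOn
      have hwpos : 0 ≤ ∫ x in Set.Ioc p₀ b, w x :=
        setIntegral_nonneg measurableSet_Ioc fun x _ => hw0 x
      have := hbS.2
      rw [hsplit, hfz'] at hsub
      linarith
  refine ⟨?_, ?_, ?_⟩
  · intro p _ q _ _
    have hp : (∫ x in Set.Iic p, (w x - f x)) = 0 := hH0 p
    have hq : (∫ x in Set.Iic q, (w x - f x)) = 0 := hH0 q
    show 2 * (∫ x in Set.Iic p, (w x - f x)) ≤ 2 * ∫ x in Set.Iic q, (w x - f x)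
    rw [hp, hq]
  · intro p
    have hp : (∫ x in Set.Iic p, (w x - f x)) = 0 := hH0 p
    rw [hp, mul_zero]
  · intro p
    have h : (∫ x in Set.Iic p, (w x - f x)) = 0 := hH0 p
    have hsplit : ∫ x in Set.Iic p, (w x - f x)
        = (∫ x in Set.Iic p, w x) - ∫ x in Set.Iic p, f x :=
      integral_sub hwint.integrableOn hfint.integrableOn
    rw [hsplit] at h
    linarith
end

section
/- Let Ω = ℝ and φ = ψ = |·|. Let w : ℝ → [0,∞) be compactly supported with ∫ w = 1. Then the only function f in the class 𝒳 = { f ∈ L¹(ℝ) : f ≥ 0 a.e., ∫ f = 1 } satisfying the equilibrium condition |∫_ℝ (w(x) − f(x)) sign(p − x) dx|² f(p) = 0 for almost every p ∈ ℝ is f = w almost everywhere. In particular, the prescribed image profile w is the unique equilibrium of the mean-field equation in 𝒳. -/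
open MeasureTheory Set Filter

/-- uniqueness of the equilibrium on `ℝ` for `φ = ψ = |·|`: If `w ≥ 0`
is compactly supported with `∫ w = 1`, then the only `f ∈ 𝒳 = {f ∈ L¹(ℝ) : f ≥ 0 a.e.,
∫ f = 1}` satisfying the equilibrium condition
`|∫ (w(x) − f(x)) sign(p − x) dx|² f(p) = 0` for a.e. `p` is `f = w` a.e. -/
theorem equilibrium_unique_is_datum
    (w : ℝ → ℝ) (hw0 : ∀ x, 0 ≤ w x) (hwsupp : HasCompactSupport w)
    (hwint : Integrable w) (hwnorm : ∫ x, w x = 1)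
    (f : ℝ → ℝ) (hfint : Integrable f) (hf0 : ∀ᵐ x ∂(volume : Measure ℝ), 0 ≤ f x)
    (hfnorm : ∫ x, f x = 1)
    (heq : ∀ᵐ p ∂(volume : Measure ℝ),
      |∫ x, (w x - f x) * Real.sign (p - x)| ^ 2 * f p = 0) :
    f =ᵐ[volume] w := by
  set h : ℝ → ℝ := fun x => w x - f x with hh
  have hhint : Integrable h := hwint.sub hfint
  have hhtot : ∫ x, h x = 0 := by
    rw [hh]; rw [integral_sub hwint hfint, hwnorm, hfnorm]; ring
  set H : ℝ → ℝ := fun p => ∫ x in Iic p, h x with hHdef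
  -- difference identity
  have hdiff : ∀ a b : ℝ, a ≤ b → H b = H a + ∫ x in Ioc a b, h x := by
    intro a b hab
    have hu := setIntegral_union (μ := volume) (f := h) (s := Iic a) (t := Ioc a b)
      (Iic_disjoint_Ioc le_rfl) measurableSet_Ioc hhint.integrableOn hhint.integrableOn
    rw [Iic_union_Ioc_eq_Iic hab] at hu
    exact hu
  -- continuity of H
  have hHcont : Continuous H := by
    have hHeq : H = fun p => H 0 + ∫ x in (0:ℝ)..p, h x := by
      funext p
      rcases le_total (0:ℝ) p with hp | hp
      · rw [intervalIntegral.integral_of_le hp]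
        exact hdiff 0 p hp
      · rw [intervalIntegral.integral_of_ge hp]
        have := hdiff p 0 hp
        simp only [H] at this ⊢
        linarith
    rw [hHeq]
    exact continuous_const.add (hhint.continuous_primitive 0)
  -- limits at ±∞
  have htop : Tendsto H atTop (nhds 0) := by
    have := (aecover_Iic (μ := volume) (l := atTop)
      (tendsto_id : Tendsto (fun p : ℝ => p) atTop atTop)).integral_tendsto_of_countably_generated
        hhint
    rwa [hhtot] at this
  have hIicIoi : ∀ p : ℝ, H p + ∫ x in Ioi p, h x = 0 := by
    intro p
    rw [hHdef]
    simp only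
    rw [intervalIntegral.integral_Iic_add_Ioi hhint.integrableOn hhint.integrableOn, hhtot]
  have hbot : Tendsto H atBot (nhds 0) := by
    have h1 := (aecover_Ioi (μ := volume) (l := atBot)
      (tendsto_id : Tendsto (fun p : ℝ => p) atBot atBot)).integral_tendsto_of_countably_generated
        hhint
    rw [hhtot] at h1
    have h2 : H = fun p => 0 - ∫ x in Ioi p, h x := by
      funext p; have := hIicIoi p; linarith
    rw [h2]
    have h3 : Tendsto (fun p : ℝ => (0:ℝ) - ∫ x in Ioi p, h x) atBot (nhds (0 - 0)) :=
      tendsto_const_nhds.sub h1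
    simpa using h3
  -- the equilibrium integral equals 2 * H p
  have hFid : ∀ p : ℝ, (∫ x, (w x - f x) * Real.sign (p - x)) = 2 * H p := by
    intro p
    have hne : ∀ᵐ x : ℝ, x ≠ p := by
      simp [ae_iff, not_not, setOf_eq_eq_singleton, measure_singleton]
    have hcong : (fun x => (w x - f x) * Real.sign (p - x)) =ᵐ[volume]
        fun x => (Iio p).indicator h x - (Ioi p).indicator h x := by
      filter_upwards [hne] with x hx
      rcases lt_trichotomy x p with hlt | heqx | hgt
      · rw [indicator_of_mem (mem_Iio.mpr hlt), indicator_of_notMem (by simp [not_lt, hlt.le]),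
          Real.sign_of_pos (by linarith : (0:ℝ) < p - x)]
        simp [hh]
      · exact absurd heqx hx
      · rw [indicator_of_notMem (by simp [not_lt, hgt.le]), indicator_of_mem (mem_Ioi.mpr hgt),
          Real.sign_of_neg (by linarith : p - x < 0)]
        simp [hh]
    rw [integral_congr_ae hcong,
      integral_sub (hhint.indicator measurableSet_Iio) (hhint.indicator measurableSet_Ioi),
      integral_indicator measurableSet_Iio, integral_indicator measurableSet_Ioi]
    have h1 : ∫ x in Iio p, h x = H p := (integral_Iic_eq_integral_Iio).symm
    have h2 := hIicIoi p
    rw [h1]; linarith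
  -- a.e., if H p ≠ 0 then f p = 0
  have heq' : ∀ᵐ p : ℝ ∂volume, H p ≠ 0 → f p = 0 := by
    filter_upwards [heq] with p hp hH0
    have h2 : |∫ x, (w x - f x) * Real.sign (p - x)| ^ 2 ≠ 0 := by
      rw [hFid p]
      simp [pow_eq_zero_iff, abs_eq_zero, hH0]
    exact (mul_eq_zero.mp hp).resolve_left h2
  -- monotonicity of H on intervals where H ≠ 0
  have hmono : ∀ a b : ℝ, a ≤ b → (∀ q ∈ Ioo a b, H q ≠ 0) → H a ≤ H b := by
    intro a b hab hne
    have hf0' : ∫ x in Ioc a b, f x = 0 := by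
      rw [integral_Ioc_eq_integral_Ioo]
      have hae : ∀ᵐ x ∂(volume.restrict (Ioo a b)), f x = 0 := by
        rw [ae_restrict_iff' measurableSet_Ioo]
        filter_upwards [heq'] with x hx hmem
        exact hx (hne x hmem)
      calc ∫ x in Ioo a b, f x = ∫ x in Ioo a b, (0:ℝ) := integral_congr_ae hae
        _ = 0 := by simp
    have hw' : (0:ℝ) ≤ ∫ x in Ioc a b, w x :=
      setIntegral_nonneg measurableSet_Ioc fun x _ => hw0 x
    have hd := hdiff a b hab
    have hsub : ∫ x in Ioc a b, h x = (∫ x in Ioc a b, w x) - ∫ x in Ioc a b, f x := by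
      rw [hh]; exact integral_sub hwint.integrableOn hfint.integrableOn
    rw [hsub, hf0'] at hd
    linarith
  -- H vanishes everywhere
  have hH0 : ∀ p, H p = 0 := by
    intro p₀
    by_contra hne0
    rcases lt_or_gt_of_ne hne0 with hneg | hpos
    · -- H p₀ < 0 : look to the left
      by_cases hS : ({q : ℝ | H q = 0} ∩ Iic p₀).Nonempty
      · have hcl : IsClosed ({q : ℝ | H q = 0} ∩ Iic p₀) :=
          (isClosed_eq hHcont continuous_const).inter isClosed_Iic
        have hbdd : BddAbove ({q : ℝ | H q = 0} ∩ Iic p₀) := ⟨p₀, fun x hx => hx.2⟩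
        have hmem := hcl.csSup_mem hS hbdd
        set a := sSup ({q : ℝ | H q = 0} ∩ Iic p₀) with ha
        have ha0 : H a = 0 := hmem.1
        have hap : a ≤ p₀ := hmem.2
        have hle : H a ≤ H p₀ := by
          refine hmono a p₀ hap fun q hq hq0 => ?_
          exact absurd (le_csSup hbdd ⟨hq0, hq.2.le⟩) (not_le.mpr hq.1)
        linarith
      · have hle : ∀ q ≤ p₀, H q ≤ H p₀ := by
          intro q hq
          refine hmono q p₀ hq fun r hr hr0 => hS ⟨r, hr0, hr.2.le⟩
        have : (0:ℝ) ≤ H p₀ := le_of_tendsto hbot (eventually_atBot.mpr ⟨p₀, hle⟩)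
        linarith
    · -- H p₀ > 0 : look to the right
      by_cases hS : ({q : ℝ | H q = 0} ∩ Ici p₀).Nonempty
      · have hcl : IsClosed ({q : ℝ | H q = 0} ∩ Ici p₀) :=
          (isClosed_eq hHcont continuous_const).inter isClosed_Ici
        have hbdd : BddBelow ({q : ℝ | H q = 0} ∩ Ici p₀) := ⟨p₀, fun x hx => hx.2⟩
        have hmem := hcl.csInf_mem hS hbdd
        set b := sInf ({q : ℝ | H q = 0} ∩ Ici p₀) with hb
        have hb0 : H b = 0 := hmem.1
        have hpb : p₀ ≤ b := hmem.2
        have hle : H p₀ ≤ H b := by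
          refine hmono p₀ b hpb fun q hq hq0 => ?_
          exact absurd (csInf_le hbdd ⟨hq0, hq.1.le⟩) (not_le.mpr hq.2)
        linarith
      · have hle : ∀ q, p₀ ≤ q → H p₀ ≤ H q := by
          intro q hq
          refine hmono p₀ q hq fun r hr hr0 => hS ⟨r, hr0, hr.1.le⟩
        have : H p₀ ≤ (0:ℝ) := ge_of_tendsto htop (eventually_atTop.mpr ⟨p₀, hle⟩)
        linarith
  -- hence the primitives of f and w agree
  have hint_eq : ∀ p : ℝ, ∫ x in Iic p, f x = ∫ x in Iic p, w x := by
    intro p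
    have h2 : (∫ x in Iic p, w x) - ∫ x in Iic p, f x = 0 := by
      rw [← integral_sub hwint.integrableOn hfint.integrableOn]
      exact hH0 p
    linarith
  -- compare the measures with densities f and w
  have hfm : AEMeasurable (fun x => ENNReal.ofReal (f x)) volume :=
    ENNReal.measurable_ofReal.comp_aemeasurable hfint.aemeasurable
  have hwm : AEMeasurable (fun x => ENNReal.ofReal (w x)) volume :=
    ENNReal.measurable_ofReal.comp_aemeasurable hwint.aemeasurable
  have hmeas_eq : volume.withDensity (fun x => ENNReal.ofReal (f x))
      = volume.withDensity (fun x => ENNReal.ofReal (w x)) := by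
    haveI : IsFiniteMeasure (volume.withDensity (fun x => ENNReal.ofReal (f x))) := by
      refine isFiniteMeasure_withDensity ?_
      rw [← ofReal_integral_eq_lintegral_ofReal hfint hf0, hfnorm]
      exact ENNReal.ofReal_ne_top
    refine Measure.ext_of_Iic _ _ fun p => ?_
    rw [withDensity_apply _ measurableSet_Iic, withDensity_apply _ measurableSet_Iic,
      ← ofReal_integral_eq_lintegral_ofReal hfint.integrableOn (ae_restrict_of_ae hf0),
      ← ofReal_integral_eq_lintegral_ofReal hwint.integrableOn
        (ae_restrict_of_ae (ae_of_all _ hw0)),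
      hint_eq p]
  have hae := (withDensity_eq_iff_of_sigmaFinite hfm hwm).mp hmeas_eq
  filter_upwards [hae, hf0] with x hx hx0
  exact (ENNReal.ofReal_eq_ofReal_iff hx0 (hw0 x)).mp hx
end
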